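/- Let x, y be m-dimensional probability vectors and x', y' be n-dimensional probability vectors. If x is an interior point of S(y) and x' is an interior point of S(y'), then x ⊗ x' is an interior point of S(y ⊗ y'). Equivalently, if e_l(x) < e_l(y) for all 1 ≤ l ≤ m-1 and e_l(x') < e_l(y') for all 1 ≤ l ≤ n-1, then e_l(x ⊗ x') < e_l(y ⊗ y') for all 1 ≤ l ≤ mn-1. -/
import Mathlib


open Finset

variable {ι κ : Type*}

/-- `eSum x l` is the sum of the `l` largest components of `x`. -/
noncomputable def eSum [Fintype ι] (x : ι → ℝ) (l : ℕ) : ℝ :=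
  sSup {r : ℝ | ∃ s : Finset ι, s.card = l ∧ r = ∑ i ∈ s, x i}

/-- Majorization `x ≺ y` for vectors over the same (finite) index type:
`e_l(x) ≤ e_l(y)` for all `1 ≤ l ≤ n - 1`, with equal total sums. -/
def Maj [Fintype ι] (x y : ι → ℝ) : Prop :=
  (∀ l : ℕ, 1 ≤ l → l < Fintype.card ι → eSum x l ≤ eSum y l) ∧
    ∑ i, x i = ∑ i, y i

/-- A probability vector: nonnegative components summing to 1. -/
def IsProbVec [Fintype ι] (x : ι → ℝ) : Prop :=
  (∀ i, 0 ≤ x i) ∧ ∑ i, x i = 1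

/-- Kronecker product of two vectors. -/
def kron (x : ι → ℝ) (c : κ → ℝ) : ι × κ → ℝ := fun p => x p.1 * c p.2

/-- `k`-fold Kronecker power of a vector. -/
def kpow (x : ι → ℝ) (k : ℕ) : (Fin k → ι) → ℝ := fun f => ∏ j, x (f j)

/-- Direct sum (concatenation) of two vectors. -/
def dsum (x : ι → ℝ) (c : κ → ℝ) : ι ⊕ κ → ℝ := Sum.elim x c

/-- `k`-fold direct sum (concatenation) of `x` with itself. -/
def dpow (x : ι → ℝ) (k : ℕ) : Fin k × ι → ℝ := fun p => x p.2

/-- `x ∈ S°(y)`: all partial-sum inequalities `e_l(x) < e_l(y)` are strict for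
`1 ≤ l ≤ n - 1`, and the total sums coincide. -/
def InteriorS [Fintype ι] (x y : ι → ℝ) : Prop :=
  (∀ l : ℕ, 1 ≤ l → l < Fintype.card ι → eSum x l < eSum y l) ∧
    ∑ i, x i = ∑ i, y i

/-- `d_x`: the number of nonzero components of `x`. -/
noncomputable def dsupp (x : ι → ℝ) : ℕ := Nat.card (Function.support x)

/-- The `α`-Renyi entropy `S^{(α)}(x)`; at `α = 1` it is the Shannon entropy. -/
noncomputable def renyi [Fintype ι] (x : ι → ℝ) (α : ℝ) : ℝ :=
  if α = 1 then -∑ i, x i * Real.logb 2 (x i)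
  else (if 0 ≤ α then (1 : ℝ) else -1) / (1 - α) *
    Real.logb 2 (∑ i, if x i = 0 then 0 else x i ^ α)

/-- The Renyi entropy of `x` is not less than that of `y`. -/
def RenyiGE [Fintype ι] [Fintype κ] (x : ι → ℝ) (y : κ → ℝ) : Prop :=
  (dsupp x > dsupp y ∧ ∀ α : ℝ, 0 ≤ α → renyi y α ≤ renyi x α) ∨
  (dsupp x = dsupp y ∧ ∀ α : ℝ, renyi y α ≤ renyi x α)

set_option linter.unusedSectionVars false

section A
variable [Fintype ι] [Fintype κ]

lemma eSum_finite (x : ι → ℝ) (l : ℕ) :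
    {r : ℝ | ∃ s : Finset ι, s.card = l ∧ r = ∑ i ∈ s, x i}.Finite := by
  have : {r : ℝ | ∃ s : Finset ι, s.card = l ∧ r = ∑ i ∈ s, x i} ⊆
      (fun s : Finset ι => ∑ i ∈ s, x i) '' Set.univ := by
    rintro r ⟨s, -, rfl⟩; exact ⟨s, trivial, rfl⟩
  exact (Set.finite_univ.image _).subset this

lemma le_eSum (x : ι → ℝ) {l : ℕ} {s : Finset ι} (hs : s.card = l) :
    ∑ i ∈ s, x i ≤ eSum x l :=
  le_csSup (eSum_finite x l).bddAbove ⟨s, hs, rfl⟩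

lemma exists_eSum (x : ι → ℝ) {l : ℕ} (hl : l ≤ Fintype.card ι) :
    ∃ s : Finset ι, s.card = l ∧ eSum x l = ∑ i ∈ s, x i := by
  obtain ⟨s, -, hs⟩ := Finset.exists_subset_card_eq (s := (univ : Finset ι)) (by simpa using hl)
  have hne : {r : ℝ | ∃ s : Finset ι, s.card = l ∧ r = ∑ i ∈ s, x i}.Nonempty := ⟨_, s, hs, rfl⟩
  exact hne.csSup_mem (eSum_finite x l)

lemma eSum_zero (x : ι → ℝ) : eSum x 0 = 0 := by
  have : {r : ℝ | ∃ s : Finset ι, s.card = 0 ∧ r = ∑ i ∈ s, x i} = {0} := by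
    ext r; simp [Finset.card_eq_zero]
  simp [eSum, this]

lemma eSum_full (x : ι → ℝ) : eSum x (Fintype.card ι) = ∑ i, x i := by
  obtain ⟨s, hcard, hs⟩ := exists_eSum x (le_refl (Fintype.card ι))
  have : s = univ := Finset.eq_univ_of_card s hcard
  rw [hs, this]

lemma eSum_mono {x : ι → ℝ} (hx : ∀ i, 0 ≤ x i) {k l : ℕ} (hkl : k ≤ l)
    (hl : l ≤ Fintype.card ι) : eSum x k ≤ eSum x l := by
  obtain ⟨s, hcard, hs⟩ := exists_eSum x (hkl.trans hl)
  obtain ⟨t, hst, -, ht⟩ := Finset.exists_subsuperset_card_eq s.subset_univ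
    (hcard.le.trans hkl) (by simpa using hl)
  calc eSum x k = ∑ i ∈ s, x i := hs
    _ ≤ ∑ i ∈ t, x i := Finset.sum_le_sum_of_subset_of_nonneg hst (fun i _ _ => hx i)
    _ ≤ eSum x l := le_eSum x ht

lemma eSum_pos {x : ι → ℝ} (hx : ∀ i, 0 ≤ x i) (hsum : ∑ i, x i = 1) {l : ℕ}
    (h1 : 1 ≤ l) (hl : l ≤ Fintype.card ι) : 0 < eSum x l := by
  have : ∃ i, 0 < x i := by
    by_contra hc
    push_neg at hc
    have : ∑ i, x i = 0 := Finset.sum_eq_zero (fun i _ => le_antisymm (hc i) (hx i))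
    rw [hsum] at this; norm_num at this
  obtain ⟨i, hi⟩ := this
  obtain ⟨t, hit, -, ht⟩ := Finset.exists_subsuperset_card_eq
    (Finset.singleton_subset_iff.2 (Finset.mem_univ i)) (by simpa using h1) (by simpa using hl)
  calc (0:ℝ) < x i := hi
    _ ≤ ∑ j ∈ t, x j := Finset.single_le_sum (fun j _ => hx j)
        (hit (Finset.mem_singleton_self i))
    _ ≤ eSum x l := le_eSum x ht

lemma eSum_reindex (e : κ ≃ ι) (x : ι → ℝ) (l : ℕ) : eSum (x ∘ e) l = eSum x l := by
  unfold eSum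
  congr 1
  ext r
  constructor
  · rintro ⟨s, hs, rfl⟩
    exact ⟨s.map e.toEmbedding, by simp [hs], by simp [Finset.sum_map]⟩
  · rintro ⟨s, hs, rfl⟩
    refine ⟨s.map e.symm.toEmbedding, by simp [hs], ?_⟩
    rw [Finset.sum_map]
    simp

end A

section B
variable [Fintype ι] [Fintype κ] [DecidableEq ι] [DecidableEq κ]

/-- the `i`-th slce of a finite set of pairs -/
def slce (T : Finset (ι × κ)) (i : ι) : Finset κ :=
  (T.filter fun p => p.1 = i).image Prod.snd

lemma slice_injOn (T : Finset (ι × κ)) (i : ι) :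
    ∀ p ∈ T.filter fun p => p.1 = i, ∀ q ∈ T.filter fun p => p.1 = i,
      p.2 = q.2 → p = q := by
  intro p hp q hq hpq
  rw [Finset.mem_filter] at hp hq
  exact Prod.ext (hp.2.trans hq.2.symm) hpq

lemma slice_sum (x : ι → ℝ) (c : κ → ℝ) (T : Finset (ι × κ)) :
    ∑ p ∈ T, x p.1 * c p.2 = ∑ i, x i * ∑ j ∈ slce T i, c j := by
  rw [← Finset.sum_fiberwise T (fun p => p.1) (fun p => x p.1 * c p.2)]
  refine Finset.sum_congr rfl fun i _ => ?_
  rw [slce, Finset.sum_image (slice_injOn T i), Finset.mul_sum]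
  refine Finset.sum_congr rfl fun p hp => ?_
  rw [Finset.mem_filter] at hp
  rw [hp.2]

lemma slice_card (T : Finset (ι × κ)) : ∑ i, (slce T i).card = T.card := by
  rw [Finset.card_eq_sum_card_fiberwise (f := Prod.fst) (t := univ) (fun p _ => mem_univ _)]
  refine Finset.sum_congr rfl fun i _ => ?_
  rw [slce, Finset.card_image_of_injOn]
  intro p hp q hq hpq
  exact slice_injOn T i p hp q hq hpq

lemma slice_card_le (T : Finset (ι × κ)) (i : ι) : (slce T i).card ≤ Fintype.card κ :=
  Finset.card_le_univ _

/-- embedding `j ↦ (i, j)` -/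
def embR (i : ι) : κ ↪ ι × κ := ⟨fun j => (i, j), fun a b h => by simpa using h⟩

lemma constr (x : ι → ℝ) (c : κ → ℝ) (u : ι → Finset κ) :
    ∑ i, x i * ∑ j ∈ u i, c j ≤ eSum (kron x c) (∑ i, (u i).card) := by
  classical
  set T : Finset (ι × κ) := univ.biUnion fun i => (u i).map (embR i) with hT
  have hdisj : ∀ i ∈ (univ : Finset ι), ∀ i' ∈ (univ : Finset ι), i ≠ i' →
      Disjoint ((u i).map (embR i)) ((u i').map (embR i')) := by
    intro i _ i' _ hne
    rw [Finset.disjoint_left]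
    rintro p hp hp'
    simp only [Finset.mem_map, embR, Function.Embedding.coeFn_mk] at hp hp'
    obtain ⟨a, -, rfl⟩ := hp
    obtain ⟨b, -, hb⟩ := hp'
    exact hne (congrArg Prod.fst hb).symm
  have hcard : T.card = ∑ i, (u i).card := by
    rw [hT, Finset.card_biUnion hdisj]
    simp
  have hsum : ∑ p ∈ T, kron x c p = ∑ i, x i * ∑ j ∈ u i, c j := by
    rw [hT, Finset.sum_biUnion]
    · refine Finset.sum_congr rfl fun i _ => ?_
      rw [Finset.sum_map, Finset.mul_sum]
      rfl
    · intro i _ i' _ hne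
      exact hdisj i (mem_univ i) i' (mem_univ i') hne
  rw [← hsum]
  exact le_eSum (kron x c) hcard

end B

section C
variable [Fintype ι] [Fintype κ]

lemma interior_weak {x y : ι → ℝ} (h : InteriorS x y) :
    ∀ t, t ≤ Fintype.card ι → eSum x t ≤ eSum y t := by
  intro t ht
  rcases Nat.eq_zero_or_pos t with rfl | h1
  · simp [eSum_zero]
  rcases eq_or_lt_of_le ht with rfl | hlt
  · rw [eSum_full, eSum_full, h.2]
  · exact (h.1 t h1 hlt).le

lemma kron_right_le [DecidableEq ι] [DecidableEq κ] (x : ι → ℝ) (hx : ∀ i, 0 ≤ x i)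
    (c d : κ → ℝ) (hw : ∀ t, t ≤ Fintype.card κ → eSum c t ≤ eSum d t) {l : ℕ}
    (hl : l ≤ Fintype.card (ι × κ)) :
    eSum (kron x c) l ≤ eSum (kron x d) l := by
  obtain ⟨T, hTcard, hT⟩ := exists_eSum (kron x c) hl
  choose u hu1 hu2 using fun i => exists_eSum d (slice_card_le T i)
  calc eSum (kron x c) l = ∑ i, x i * ∑ j ∈ slce T i, c j := by
        rw [hT]; exact slice_sum x c T
    _ ≤ ∑ i, x i * eSum d ((slce T i).card) := by
        refine Finset.sum_le_sum fun i _ => ?_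
        exact mul_le_mul_of_nonneg_left
          ((le_eSum c rfl).trans (hw _ (slice_card_le T i))) (hx i)
    _ = ∑ i, x i * ∑ j ∈ u i, d j := by
        exact Finset.sum_congr rfl fun i _ => by rw [hu2]
    _ ≤ eSum (kron x d) (∑ i, (u i).card) := constr x d u
    _ = eSum (kron x d) l := by
        congr 1
        calc ∑ i, (u i).card = ∑ i, (slce T i).card :=
              Finset.sum_congr rfl fun i _ => hu1 i
          _ = T.card := slice_card T
          _ = l := hTcard

lemma kron_left_le [DecidableEq ι] [DecidableEq κ] (c : κ → ℝ) (hc : ∀ j, 0 ≤ c j)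
    (x y : ι → ℝ) (hw : ∀ t, t ≤ Fintype.card ι → eSum x t ≤ eSum y t) {l : ℕ}
    (hl : l ≤ Fintype.card (ι × κ)) :
    eSum (kron x c) l ≤ eSum (kron y c) l := by
  have h1 : kron x c = kron c x ∘ (Equiv.prodComm ι κ) := by
    funext p; simp [kron, mul_comm]
  have h2 : kron y c = kron c y ∘ (Equiv.prodComm ι κ) := by
    funext p; simp [kron, mul_comm]
  rw [h1, h2, eSum_reindex, eSum_reindex]
  exact kron_right_le c hc x y hw (by simpa [Fintype.card_prod, mul_comm] using hl)

end C

theorem kron_interior {m n : ℕ} (x y : Fin m → ℝ) (x' y' : Fin n → ℝ)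
    (hx0 : ∀ i, 0 ≤ x i) (hx1 : ∑ i, x i = 1)
    (hy0 : ∀ i, 0 ≤ y i) (hy1 : ∑ i, y i = 1)
    (hx'0 : ∀ j, 0 ≤ x' j) (hx'1 : ∑ j, x' j = 1)
    (hy'0 : ∀ j, 0 ≤ y' j) (hy'1 : ∑ j, y' j = 1)
    (h : InteriorS x y) (h' : InteriorS x' y') :
    InteriorS (kron x x') (kron y y') := by
  classical
  have hcard : Fintype.card (Fin m × Fin n) = m * n := by simp
  have hwx : ∀ t, t ≤ Fintype.card (Fin m) → eSum x t ≤ eSum y t := interior_weak h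
  have hwx' : ∀ t, t ≤ Fintype.card (Fin n) → eSum x' t ≤ eSum y' t := interior_weak h'
  have hsum : ∑ p, kron x x' p = ∑ p, kron y y' p := by
    simp only [kron, Fintype.sum_prod_type, ← Finset.mul_sum, ← Finset.sum_mul]
    rw [h.2, h'.2]
  refine ⟨?_, hsum⟩
  intro l hl1 hl2
  have hln : l < m * n := by rwa [hcard] at hl2
  have hl2' : l ≤ Fintype.card (Fin m × Fin n) := hl2.le
  have hn1 : 1 ≤ n := by
    rcases Nat.eq_zero_or_pos n with rfl | h1
    · omega
    · exact h1
  obtain ⟨T, hTcard, hT⟩ := exists_eSum (kron x x') hl2'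
  have htsum : ∑ i, (slce T i).card = l := (slice_card T).trans hTcard
  have htle : ∀ i, (slce T i).card ≤ n := fun i => by simpa using slice_card_le T i
  by_cases hcase : ∃ i, 0 < x i ∧ 1 ≤ (slce T i).card ∧ (slce T i).card < n
  · obtain ⟨i0, hxi0, ht1, ht2⟩ := hcase
    choose u hu1 hu2 using fun i => exists_eSum y' (slice_card_le T i)
    have step1 : eSum (kron x x') l ≤ ∑ i, x i * eSum x' ((slce T i).card) := by
      rw [hT]; simp only [kron]; rw [slice_sum]
      exact Finset.sum_le_sum fun i _ => mul_le_mul_of_nonneg_left (le_eSum x' rfl) (hx0 i)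
    have step2 : ∑ i, x i * eSum x' ((slce T i).card)
        < ∑ i, x i * eSum y' ((slce T i).card) := by
      refine Finset.sum_lt_sum
        (fun i _ => mul_le_mul_of_nonneg_left (hwx' _ (slice_card_le T i)) (hx0 i))
        ⟨i0, Finset.mem_univ i0, ?_⟩
      exact mul_lt_mul_of_pos_left (h'.1 _ ht1 (by simpa using ht2)) hxi0
    have step3 : ∑ i, x i * eSum y' ((slce T i).card) ≤ eSum (kron x y') l := by
      have hkey := constr x y' u
      have hc : ∑ i, (u i).card = l := by
        rw [Finset.sum_congr rfl fun i _ => hu1 i]; exact htsum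
      rw [hc] at hkey
      calc ∑ i, x i * eSum y' ((slce T i).card) = ∑ i, x i * ∑ j ∈ u i, y' j :=
            Finset.sum_congr rfl fun i _ => by rw [hu2]
        _ ≤ _ := hkey
    have step4 : eSum (kron x y') l ≤ eSum (kron y y') l :=
      kron_left_le y' hy'0 x y hwx hl2'
    linarith
  · push_neg at hcase
    set A : Finset (Fin m) := univ.filter (fun i => 0 < x i ∧ (slce T i).card = n) with hA
    have hP1 : ∀ i, ∑ j ∈ slce T i, x' j ≤ 1 := by
      intro i
      rw [← hx'1]
      exact Finset.sum_le_sum_of_subset_of_nonneg (Finset.subset_univ _) (fun j _ _ => hx'0 j)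
    have hbound : eSum (kron x x') l ≤ ∑ i ∈ A, x i := by
      rw [hT]; simp only [kron]; rw [slice_sum]
      calc ∑ i, x i * ∑ j ∈ slce T i, x' j ≤ ∑ i, if i ∈ A then x i else 0 := by
            refine Finset.sum_le_sum fun i _ => ?_
            by_cases hiA : i ∈ A
            · simp only [hiA, if_true]
              calc x i * ∑ j ∈ slce T i, x' j ≤ x i * 1 :=
                    mul_le_mul_of_nonneg_left (hP1 i) (hx0 i)
                _ = x i := mul_one _
            · simp only [hiA, if_false]
              rcases eq_or_lt_of_le (hx0 i) with hxi | hxi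
              · rw [← hxi, zero_mul]
              · rcases Nat.eq_zero_or_pos ((slce T i).card) with h0 | h1
                · rw [Finset.card_eq_zero.1 h0, Finset.sum_empty, mul_zero]
                · exfalso
                  have hn : (slce T i).card = n :=
                    le_antisymm (htle i) (hcase i hxi h1)
                  exact hiA (by rw [hA]; exact Finset.mem_filter.2 ⟨Finset.mem_univ i, hxi, hn⟩)
        _ = ∑ i ∈ A, x i := by rw [Finset.sum_ite_mem, Finset.univ_inter]
    have hk1 : ∑ p, kron x x' p = 1 := by
      simp only [kron, Fintype.sum_prod_type, ← Finset.mul_sum, ← Finset.sum_mul]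
      rw [hx1, hx'1, one_mul]
    have hpos : 0 < eSum (kron x x') l :=
      eSum_pos (fun p => mul_nonneg (hx0 _) (hx'0 _)) hk1 hl1 hl2'
    have hA1 : 1 ≤ A.card := by
      rcases Finset.eq_empty_or_nonempty A with he | hne
      · exfalso; rw [he, Finset.sum_empty] at hbound; linarith
      · exact Finset.card_pos.2 hne
    have hAn : A.card * n ≤ l := by
      calc A.card * n = ∑ _i ∈ A, n := by rw [Finset.sum_const, smul_eq_mul, mul_comm]
        _ = ∑ i ∈ A, (slce T i).card := Finset.sum_congr rfl fun i hi =>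
            ((Finset.mem_filter.1 hi).2.2).symm
        _ ≤ ∑ i, (slce T i).card := Finset.sum_le_sum_of_subset (Finset.subset_univ A)
        _ = l := htsum
    have hAm : A.card < m := by
      by_contra hge
      push_neg at hge
      have : m * n ≤ A.card * n := Nat.mul_le_mul_right n hge
      omega
    have hstrict : eSum x A.card < eSum y A.card := h.1 A.card hA1 (by simpa using hAm)
    have hxA : ∑ i ∈ A, x i ≤ eSum x A.card := le_eSum x rfl
    obtain ⟨B, hBcard, hB⟩ :=
      exists_eSum y (show A.card ≤ Fintype.card (Fin m) by simpa using hAm.le)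
    have hstep : eSum y A.card ≤ eSum (kron y y') (A.card * n) := by
      have hkey := constr y y' (fun i => if i ∈ B then (univ : Finset (Fin n)) else ∅)
      have hcc : ∑ i, (if i ∈ B then (univ : Finset (Fin n)) else ∅).card = A.card * n := by
        simp only [apply_ite Finset.card, Finset.card_univ, Finset.card_empty,
          Fintype.card_fin]
        rw [Finset.sum_ite_mem, Finset.univ_inter, Finset.sum_const, smul_eq_mul, hBcard]
      rw [hcc] at hkey
      refine le_trans (le_of_eq ?_) hkey
      rw [hB]
      calc ∑ i ∈ B, y i = ∑ i, if i ∈ B then y i else 0 := by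
            rw [Finset.sum_ite_mem, Finset.univ_inter]
        _ = ∑ i, y i * ∑ j ∈ (if i ∈ B then (univ : Finset (Fin n)) else ∅), y' j := by
            refine Finset.sum_congr rfl fun i _ => ?_
            by_cases hiB : i ∈ B <;> simp [hiB, hy'1]
    have hmono : eSum (kron y y') (A.card * n) ≤ eSum (kron y y') l :=
      eSum_mono (fun p => mul_nonneg (hy0 _) (hy'0 _)) hAn hl2'
    linarith


/-- If `x ∈ S°(y)` and `x' ∈ S°(y')`, then `x ⊗ x' ∈ S°(y ⊗ y')`. -/
theorem stmt7 {m n : ℕ} (x y : Fin m → ℝ) (x' y' : Fin n → ℝ)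
    (hx : IsProbVec x) (hy : IsProbVec y) (hx' : IsProbVec x') (hy' : IsProbVec y')
    (h : InteriorS x y) (h' : InteriorS x' y') :
    InteriorS (kron x x') (kron y y') :=
  kron_interior x y x' y' hx.1 hx.2 hy.1 hy.2 hx'.1 hx'.2 hy'.1 hy'.2 h h'
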